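/- Let ⟨ℛ, 𝒟, 𝒞⟩ be an admissible triple with 𝒟 existentially expressible in 𝒞 via ι, qVal and qBound, let 𝒫 be a SQCLP(ℛ,𝒟,𝒞)-program and G a goal for 𝒫 whose atoms are all relevant for 𝒫, and set 𝒫″ = elim_𝒟(elim_ℛ(𝒫)) and G″ = elim_𝒟(elim_ℛ(G)). If ⟨σ′, Π⟩ ∈ Sol_{𝒫″}(G″), ν ∈ Sol_𝒞(Π) and θ = σ′ν, then ⟨θ, Π⟩ ∈ Sol_{𝒫″}(G″), and moreover Wθ ∈ ran(ι) for every variable W of G″ that is not a variable of G (in particular for every qualification variable of G). -/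

import Mathlib

/-!
Every derivation in Constrained Horn Logic from `Π` stays a derivation from `Π` after
instantiating it by a solution `ν` of `Π`: the constraints entailed by `Π` are
entailed in instantiated form, since `ν` followed by any valuation is again `ν`.
This gives the first claim. For the second, a variable of `G''` that is not a data
variable of `G` is either a qualification variable `Wᵢ` or one of the fresh `wᵢ'`;
either way `G''` contains the atom `qVal(W)`. The only clause of `𝒫''` for `qVal` is
`qVal(X) ← B₁,…,Bₘ`, so a derivation of `qVal(Wσ')` provides a valuation solving
`∃Ȳ(B₁ ∧ … ∧ Bₘ)` that sends `X` to `Wσ'ν`, which by the specification of `qVal`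
is some `ι(e)`.
-/

open Classical

namespace SQCLP

/-- A term signature: variables, basic values and ranked data constructors. -/
structure TSig where
  Var : Type
  BV : Type
  DC : Type
  dcArity : DC → ℕ

/-- Terms over a term signature. -/
inductive Term (S : TSig) : Type
  | var : S.Var → Term S
  | bv : S.BV → Term S
  | app : S.DC → List (Term S) → Term S

/-- Substitutions map variables to terms. -/
abbrev Subst (S : TSig) := S.Var → Term S

variable {S : TSig}

mutual
  /-- Application of a substitution to a term. -/
  def Term.subst (θ : Subst S) : Term S → Term S
    | .var x => θ x
    | .bv u => .bv u
    | .app c ts => .app c (Term.substList θ ts)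
  /-- Application of a substitution to a list of terms. -/
  def Term.substList (θ : Subst S) : List (Term S) → List (Term S)
    | [] => []
    | t :: ts => Term.subst θ t :: Term.substList θ ts
end

/-- Composition of substitutions: `(σ.comp ν) x = (σ x) ν`. -/
def Subst.comp (σ ν : Subst S) : Subst S := fun x => (σ x).subst ν

/-- A term is ground if it contains no variables. -/
inductive Term.IsGround : Term S → Prop
  | bv (u : S.BV) : IsGround (.bv u)
  | app (c : S.DC) (ts : List (Term S)) : (∀ t ∈ ts, IsGround t) → IsGround (.app c ts)

/-- The variable `x` occurs in the given term. -/
inductive Term.HasVar (x : S.Var) : Term S → Prop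
  | var : HasVar x (.var x)
  | app (c : S.DC) (ts : List (Term S)) (t : Term S) :
      t ∈ ts → HasVar x t → HasVar x (.app c ts)

/-- A valuation is a substitution all whose values are ground terms. -/
def IsValuation (η : Subst S) : Prop := ∀ x, (η x).IsGround

/-- A constraint domain over a term signature: ranked primitive predicate
symbols together with their interpretation on (ground) argument tuples. -/
structure ConstraintDomain (S : TSig) where
  PP : Type
  ppArity : PP → ℕ
  primTrue : PP → List (Term S) → Prop

variable {Cd : ConstraintDomain S}

/-- Atomic constraints: primitive atoms and equations. -/
inductive ACon (Cd : ConstraintDomain S) : Type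
  | prim : Cd.PP → List (Term S) → ACon Cd
  | eq : Term S → Term S → ACon Cd

/-- Application of a substitution to an atomic constraint. -/
def ACon.subst (θ : Subst S) : ACon Cd → ACon Cd
  | .prim r ts => .prim r (ts.map (Term.subst θ))
  | .eq t s => .eq (t.subst θ) (s.subst θ)

/-- Truth of a (ground) atomic constraint: primitive atoms via the
interpretation of the constraint domain; a ground equation is true iff its two
sides are syntactically identical. -/
def ACon.holds : ACon Cd → Prop
  | .prim r ts => Cd.primTrue r ts
  | .eq t s => t = s

/-- A valuation `η` solves an atomic constraint `c` iff `c η` is true. -/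
def solves (η : Subst S) (c : ACon Cd) : Prop := (c.subst η).holds

/-- The variable `x` occurs in the atomic constraint. -/
inductive ACon.HasVar (x : S.Var) : ACon Cd → Prop
  | prim (r : Cd.PP) (ts : List (Term S)) (t : Term S) :
      t ∈ ts → Term.HasVar x t → HasVar x (.prim r ts)
  | eqL (t s : Term S) : Term.HasVar x t → HasVar x (.eq t s)
  | eqR (t s : Term S) : Term.HasVar x s → HasVar x (.eq t s)

/-- The set of solutions (valuations) of a set of atomic constraints. -/
def SolC (Pi : Set (ACon Cd)) : Set (Subst S) :=
  {η | IsValuation η ∧ ∀ c ∈ Pi, solves η c}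

/-- A set of constraints is satisfiable iff it has some solution. -/
def Satisfiable (Pi : Set (ACon Cd)) : Prop := (SolC Pi).Nonempty

/-- Constraint entailment `Pi ⊨ c`. -/
def entails (Pi : Set (ACon Cd)) (c : ACon Cd) : Prop := ∀ η ∈ SolC Pi, solves η c

/-- An existential constraint `∃ Y₁ … Y_k (B₁ ∧ … ∧ B_m)`. -/
structure ExCon (Cd : ConstraintDomain S) where
  evars : List S.Var
  body : List (ACon Cd)

/-- A valuation `η` solves an existential constraint iff some valuation
agreeing with `η` except possibly on the existential variables makes every
atomic constraint of the body true. -/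
def ExCon.SolvedBy (e : ExCon Cd) (η : Subst S) : Prop :=
  ∃ η' : Subst S, IsValuation η' ∧ (∀ x, x ∉ e.evars → η' x = η x) ∧
    ∀ c ∈ e.body, solves η' c

/-- Entailment of an existential constraint. -/
def entailsEx (Pi : Set (ACon Cd)) (e : ExCon Cd) : Prop := ∀ η ∈ SolC Pi, e.SolvedBy η

/-- A free variable of an existential constraint. -/
def ExCon.FVar (e : ExCon Cd) (x : S.Var) : Prop :=
  x ∉ e.evars ∧ ∃ c ∈ e.body, ACon.HasVar x c

/-- Atoms over a constraint domain and an alphabet `DP` of defined predicate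
symbols: defined atoms, primitive atoms and equations. -/
inductive Atom (Cd : ConstraintDomain S) (DP : Type) : Type
  | defined : DP → List (Term S) → Atom Cd DP
  | prim : Cd.PP → List (Term S) → Atom Cd DP
  | eq : Term S → Term S → Atom Cd DP

variable {DP : Type}

/-- Application of a substitution to an atom. -/
def Atom.subst (θ : Subst S) : Atom Cd DP → Atom Cd DP
  | .defined p ts => .defined p (ts.map (Term.subst θ))
  | .prim r ts => .prim r (ts.map (Term.subst θ))
  | .eq t s => .eq (t.subst θ) (s.subst θ)

/-- Atomic constraints regarded as atoms. -/
def ACon.toAtom : ACon Cd → Atom Cd DP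
  | .prim r ts => .prim r ts
  | .eq t s => .eq t s

/-- The variable `x` occurs in the atom. -/
inductive Atom.HasVar (x : S.Var) : Atom Cd DP → Prop
  | defined (p : DP) (ts : List (Term S)) (t : Term S) :
      t ∈ ts → Term.HasVar x t → HasVar x (.defined p ts)
  | prim (r : Cd.PP) (ts : List (Term S)) (t : Term S) :
      t ∈ ts → Term.HasVar x t → HasVar x (.prim r ts)
  | eqL (t s : Term S) : Term.HasVar x t → HasVar x (.eq t s)
  | eqR (t s : Term S) : Term.HasVar x s → HasVar x (.eq t s)

/-- A clause `p(t₁,…,tₙ) ← B₁,…,Bₘ` of a CLP(𝒞)-program. -/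
structure Clause (Cd : ConstraintDomain S) (DP : Type) where
  head : DP
  args : List (Term S)
  body : List (Atom Cd DP)

/-- Constrained Horn Logic derivability `𝒫 ⊢_CHL (A ⇐ Pi)`, with the inference
rules (DA), (EA) and (PA). -/
inductive CHL (P : Set (Clause Cd DP)) (Pi : Set (ACon Cd)) : Atom Cd DP → Prop
  | DA (cl : Clause Cd DP) (θ : Subst S) (args' : List (Term S))
      (hmem : cl ∈ P) (hlen : args'.length = cl.args.length)
      (hargs : ∀ (i : ℕ) (h1 : i < args'.length) (h2 : i < cl.args.length),
        CHL P Pi (.eq (args'.get ⟨i, h1⟩) ((cl.args.get ⟨i, h2⟩).subst θ)))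
      (hbody : ∀ B ∈ cl.body, CHL P Pi (B.subst θ)) :
      CHL P Pi (.defined cl.head args')
  | EA (t s : Term S) (h : entails Pi (.eq t s)) : CHL P Pi (.eq t s)
  | PA (r : Cd.PP) (ts : List (Term S)) (h : entails Pi (.prim r ts)) :
      CHL P Pi (.prim r ts)

end SQCLP

/-- A qualification domain: a bounded lattice `D` together with an attenuation
operation `att` that is associative, commutative, monotone, has `⊤` as neutral
element, `⊥` as absorbing element, satisfies `att d e ≤ e` (strictly above `⊥`
whenever both arguments are), and distributes over binary infima. -/
structure QualDomain (D : Type) [Lattice D] [BoundedOrder D] where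
  att : D → D → D
  att_assoc : ∀ a b c : D, att (att a b) c = att a (att b c)
  att_comm : ∀ a b : D, att a b = att b a
  att_mono : ∀ a b c d : D, a ≤ b → c ≤ d → att a c ≤ att b d
  att_top : ∀ d : D, att d ⊤ = d
  att_bot : ∀ d : D, att d ⊥ = ⊥
  att_le : ∀ d e : D, att d e ≤ e
  att_ne_bot : ∀ d e : D, d ≠ ⊥ → e ≠ ⊥ → att d e ≠ ⊥
  att_inf : ∀ d e₁ e₂ : D, att d (e₁ ⊓ e₂) = att d e₁ ⊓ att d e₂

namespace SQCLP

variable {S : TSig} {Cd : ConstraintDomain S} {DP : Type}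
variable {D : Type} [Lattice D] [BoundedOrder D]

/-- An admissible proximity relation over the symbols of a constraint domain,
with values in a qualification domain `D`: reflexive and symmetric on basic
values, data constructors, defined predicate symbols (whose arity function is
`dpArity`) and primitive predicate symbols, taking the value `⊥` on symbols of
different arities.  (On variables it is fixed: `⊤` on equal variables and `⊥`
otherwise; pairs of symbols of different syntactic kinds are not comparable.) -/
structure Proximity (Cd : ConstraintDomain S) (DP : Type) (dpArity : DP → ℕ)
    (D : Type) [Lattice D] [BoundedOrder D] where
  onBV : S.BV → S.BV → D
  onDC : S.DC → S.DC → D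
  onDP : DP → DP → D
  onPP : Cd.PP → Cd.PP → D
  bv_refl : ∀ u, onBV u u = ⊤
  bv_symm : ∀ u v, onBV u v = onBV v u
  dc_refl : ∀ c, onDC c c = ⊤
  dc_symm : ∀ c c', onDC c c' = onDC c' c
  dc_arity : ∀ c c', onDC c c' ≠ ⊥ → S.dcArity c = S.dcArity c'
  dp_refl : ∀ p, onDP p p = ⊤
  dp_symm : ∀ p p', onDP p p' = onDP p' p
  dp_arity : ∀ p p', onDP p p' ≠ ⊥ → dpArity p = dpArity p'
  pp_refl : ∀ r, onPP r r = ⊤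
  pp_symm : ∀ r r', onPP r r' = onPP r' r
  pp_arity : ∀ r r', onPP r r' ≠ ⊥ → Cd.ppArity r = Cd.ppArity r'

variable {dpA : DP → ℕ}

/-- `ProxLe R d t s` holds iff `d ⊑ ℛ(t,s)`, where `ℛ` is extended structurally
from symbols to terms (for `d ≠ ⊥`; proximity of structurally incompatible
terms is `⊥`). -/
inductive ProxLe (R : Proximity Cd DP dpA D) : D → Term S → Term S → Prop
  | var (d : D) (x : S.Var) : ProxLe R d (.var x) (.var x)
  | bv (d : D) (u v : S.BV) : d ≤ R.onBV u v → ProxLe R d (.bv u) (.bv v)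
  | app (d : D) (c c' : S.DC) (ts ss : List (Term S)) :
      d ≤ R.onDC c c' → ts.length = ss.length →
      (∀ (i : ℕ) (h1 : i < ts.length) (h2 : i < ss.length),
        ProxLe R d (ts.get ⟨i, h1⟩) (ss.get ⟨i, h2⟩)) →
      ProxLe R d (.app c ts) (.app c' ss)

/-- The relation `t ≈_{d,Π} s`: there are terms `t̂`, `ŝ` with `Π ⊨ t == t̂`,
`Π ⊨ s == ŝ` and `⊥ ≠ d ⊑ ℛ(t̂, ŝ)`. -/
def approxRel (R : Proximity Cd DP dpA D) (Pi : Set (ACon Cd)) (d : D)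
    (t s : Term S) : Prop :=
  d ≠ ⊥ ∧ ∃ th sh : Term S,
    entails Pi (.eq t th) ∧ entails Pi (.eq s sh) ∧ ProxLe R d th sh

/-- A qualified program clause `p(t₁,…,tₙ) ←α B₁#w₁, …, Bₘ#wₘ`; the threshold
value `none` represents `?`. -/
structure QClause (Cd : ConstraintDomain S) (DP : Type)
    (D : Type) [Lattice D] [BoundedOrder D] where
  head : DP
  args : List (Term S)
  att : D
  body : List (Atom Cd DP × Option D)

/-- Well-formedness of a qualified clause: the attenuation value and all
threshold values belong to `D∖{⊥}`. -/
def QClause.WF (cl : QClause Cd DP D) : Prop :=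
  cl.att ≠ ⊥ ∧ ∀ b ∈ cl.body, ∀ w, b.2 = some w → w ≠ ⊥

/-- An SQCLP (or QCLP) program is a set of qualified clauses; it is
well-formed if all of its clauses are. -/
def WFProgram (P : Set (QClause Cd DP D)) : Prop := ∀ cl ∈ P, cl.WF

/-- `geqQ e w` is the relation `e ⊒? w`: identically true if `w = ?`. -/
def geqQ (e : D) : Option D → Prop
  | none => True
  | some w => w ≤ e

/-- The variable `x` occurs in the clause `cl`. -/
def QClause.occursVar (cl : QClause Cd DP D) (x : S.Var) : Prop :=
  (∃ t ∈ cl.args, Term.HasVar x t) ∨ (∃ b ∈ cl.body, Atom.HasVar x b.1)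

/-- Proximity-based Qualified Constrained Horn Logic derivability
`𝒫 ⊢_SQCHL (A#d ⇐ Π)`, with the inference rules (SQDA), (SQEA), (SQPA).
In rule (SQDA), the side condition `d ⊑ ⊓ᵢ₌₀ⁿ dᵢ ⊓ α ∘ ⊓ⱼ₌₁ᵐ eⱼ` is expressed
with iterated binary infima (empty infima being `⊤`). -/
inductive SQCHL (Q : QualDomain D) (R : Proximity Cd DP dpA D)
    (P : Set (QClause Cd DP D)) (Pi : Set (ACon Cd)) : Atom Cd DP → D → Prop
  | SQDA (p' : DP) (args' : List (Term S)) (cl : QClause Cd DP D) (θ : Subst S)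
      (d : D) (ds es : List D)
      (hmem : cl ∈ P)
      (hprox : R.onDP p' cl.head ≠ ⊥)
      (hlen : args'.length = cl.args.length)
      (hds : ds.length = args'.length)
      (hes : es.length = cl.body.length)
      (hargs : ∀ (i : ℕ) (h1 : i < args'.length) (h2 : i < cl.args.length)
          (h3 : i < ds.length),
        SQCHL Q R P Pi (.eq (args'.get ⟨i, h1⟩) ((cl.args.get ⟨i, h2⟩).subst θ))
          (ds.get ⟨i, h3⟩))
      (hbody : ∀ (j : ℕ) (h1 : j < cl.body.length) (h2 : j < es.length),
        SQCHL Q R P Pi ((cl.body.get ⟨j, h1⟩).1.subst θ) (es.get ⟨j, h2⟩))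
      (hth : ∀ (j : ℕ) (h1 : j < cl.body.length) (h2 : j < es.length),
        geqQ (es.get ⟨j, h2⟩) (cl.body.get ⟨j, h1⟩).2)
      (hd : d ≤ (R.onDP p' cl.head ⊓ ds.foldr (· ⊓ ·) ⊤) ⊓
        Q.att cl.att (es.foldr (· ⊓ ·) ⊤)) :
      SQCHL Q R P Pi (.defined p' args') d
  | SQEA (t s : Term S) (d : D) (h : approxRel R Pi d t s) :
      SQCHL Q R P Pi (.eq t s) d
  | SQPA (r : Cd.PP) (ts : List (Term S)) (d : D)
      (h : entails Pi (.prim r ts)) : SQCHL Q R P Pi (.prim r ts) d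

/-- Qualified Constrained Horn Logic derivability `𝒫 ⊢_QCHL (A#d ⇐ Π)` (the
specialization of SQCHL to the identity proximity relation), with the
inference rules (QDA), (QEA), (QPA). -/
inductive QCHL (Q : QualDomain D)
    (P : Set (QClause Cd DP D)) (Pi : Set (ACon Cd)) : Atom Cd DP → D → Prop
  | QDA (args' : List (Term S)) (cl : QClause Cd DP D) (θ : Subst S)
      (d : D) (ds es : List D)
      (hmem : cl ∈ P)
      (hlen : args'.length = cl.args.length)
      (hds : ds.length = args'.length)
      (hes : es.length = cl.body.length)
      (hargs : ∀ (i : ℕ) (h1 : i < args'.length) (h2 : i < cl.args.length)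
          (h3 : i < ds.length),
        QCHL Q P Pi (.eq (args'.get ⟨i, h1⟩) ((cl.args.get ⟨i, h2⟩).subst θ))
          (ds.get ⟨i, h3⟩))
      (hbody : ∀ (j : ℕ) (h1 : j < cl.body.length) (h2 : j < es.length),
        QCHL Q P Pi ((cl.body.get ⟨j, h1⟩).1.subst θ) (es.get ⟨j, h2⟩))
      (hth : ∀ (j : ℕ) (h1 : j < cl.body.length) (h2 : j < es.length),
        geqQ (es.get ⟨j, h2⟩) (cl.body.get ⟨j, h1⟩).2)
      (hd : d ≤ ds.foldr (· ⊓ ·) ⊤ ⊓ Q.att cl.att (es.foldr (· ⊓ ·) ⊤)) :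
      QCHL Q P Pi (.defined cl.head args') d
  | QEA (t s : Term S) (d : D) (h : entails Pi (.eq t s)) :
      QCHL Q P Pi (.eq t s) d
  | QPA (r : Cd.PP) (ts : List (Term S)) (d : D)
      (h : entails Pi (.prim r ts)) : QCHL Q P Pi (.prim r ts) d

/-- The defined-predicate alphabet of the program `elim_ℛ(𝒫)`: the original
defined predicate symbols, the fresh binary predicate `∼`, the fresh nullary
predicates `pay_λ` (`λ ∈ D`), and a fresh predicate `p̂_C` for each clause. -/
inductive EDP (Cd : ConstraintDomain S) (DP : Type)
    (D : Type) [Lattice D] [BoundedOrder D] : Type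
  | old : DP → EDP Cd DP D
  | sim : EDP Cd DP D
  | pay : D → EDP Cd DP D
  | hat : QClause Cd DP D → EDP Cd DP D

/-- The atom `pay_λ`. -/
def payAtom (lam : D) : Atom Cd (EDP Cd DP D) := .defined (.pay lam) []

/-- The atom `t ∼ s`. -/
def simAtom (t s : Term S) : Atom Cd (EDP Cd DP D) := .defined .sim [t, s]

/-- The QCLP(𝒟,𝒞)-program `EQ_ℛ` emulating proximity-based equality: the
clause `X ∼ Y ←⊤ (X==Y)#?`; clauses `u ∼ u' ←⊤ pay_λ#?` for basic values with
`ℛ(u,u') = λ ≠ ⊥`; clauses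
`c(X₁,…,Xₙ) ∼ c'(Y₁,…,Yₙ) ←⊤ pay_λ#?, ((Xᵢ ∼ Yᵢ)#?)ᵢ` for data constructors
with `ℛ(c,c') = λ ≠ ⊥`; and clauses `pay_λ ←λ` for each `λ ∈ D∖{⊥}`
(each clause for an arbitrary choice of pairwise distinct variables). -/
def EQR (R : Proximity Cd DP dpA D) : Set (QClause Cd (EDP Cd DP D) D) :=
  {cl | ∃ X Y : S.Var, X ≠ Y ∧
      cl = ⟨.sim, [.var X, .var Y], ⊤, [(.eq (.var X) (.var Y), none)]⟩} ∪
  {cl | ∃ u u' : S.BV, R.onBV u u' ≠ ⊥ ∧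
      cl = ⟨.sim, [.bv u, .bv u'], ⊤, [(payAtom (R.onBV u u'), none)]⟩} ∪
  {cl | ∃ (c c' : S.DC) (Xs Ys : List S.Var), R.onDC c c' ≠ ⊥ ∧
      Xs.length = S.dcArity c ∧ Ys.length = S.dcArity c' ∧ (Xs ++ Ys).Nodup ∧
      cl = ⟨.sim, [.app c (Xs.map .var), .app c' (Ys.map .var)], ⊤,
        (payAtom (R.onDC c c'), none) ::
          (List.zip Xs Ys).map (fun q => (simAtom (.var q.1) (.var q.2), none))⟩} ∪
  {cl | ∃ lam : D, lam ≠ ⊥ ∧ cl = ⟨.pay lam, [], lam, []⟩}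

/-- `A∼`: the translation of atoms used by `elim_ℛ`, replacing each equation
`t == s` by `t ∼ s` (and renaming each defined predicate `p` to its copy). -/
def Atom.toSim (D : Type) [Lattice D] [BoundedOrder D] :
    Atom Cd DP → Atom Cd (EDP Cd DP D)
  | .defined p ts => .defined (.old p) ts
  | .prim r ts => .prim r ts
  | .eq t s => simAtom t s

/-- The clause `Ĉ : p̂_C(t₁,…,tₙ) ←α B̄∼`. -/
def hatClause (cl : QClause Cd DP D) : QClause Cd (EDP Cd DP D) D :=
  ⟨.hat cl, cl.args, cl.att, cl.body.map (fun b => (b.1.toSim D, b.2))⟩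

/-- The transformed program `elim_ℛ(𝒫) = EQ_ℛ ∪ ⋃_{C ∈ 𝒫} Ĉ_ℛ`, where `Ĉ_ℛ`
consists of the clause `Ĉ` and, for each `p'` with `ℛ(p,p') = λ ≠ ⊥`, a clause
`p'(X₁,…,Xₙ) ←⊤ pay_λ#?, ((Xᵢ ∼ tᵢ)#?)ᵢ, p̂_C(t₁,…,tₙ)#?` with `X₁,…,Xₙ`
pairwise distinct variables not occurring in `C`. -/
def elimR (R : Proximity Cd DP dpA D) (P : Set (QClause Cd DP D)) :
    Set (QClause Cd (EDP Cd DP D) D) :=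
  EQR R ∪ {c' | ∃ cl ∈ P, c' = hatClause cl} ∪
  {c' | ∃ cl ∈ P, ∃ p' : DP, R.onDP cl.head p' ≠ ⊥ ∧ ∃ Xs : List S.Var,
    Xs.length = cl.args.length ∧ Xs.Nodup ∧ (∀ x ∈ Xs, ¬ cl.occursVar x) ∧
    c' = ⟨.old p', Xs.map .var, ⊤,
      (payAtom (R.onDP cl.head p'), none) ::
        (List.zip Xs cl.args).map (fun q => (simAtom (.var q.1) q.2, none)) ++
        [(.defined (.hat cl) cl.args, none)]⟩}

/-- The atom `A` mentions the defined predicate symbol `p`. -/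
def Atom.mentionsDP (p : DP) : Atom Cd DP → Prop
  | .defined q _ => q = p
  | _ => False

/-- The defined predicate symbol `p` occurs in the program `𝒫`. -/
def occursInProgram (P : Set (QClause Cd DP D)) (p : DP) : Prop :=
  ∃ cl ∈ P, cl.head = p ∨ ∃ b ∈ cl.body, b.1.mentionsDP p

/-- The defined predicate symbol `p` is affected by `𝒫` (w.r.t. `ℛ`). -/
def affected (R : Proximity Cd DP dpA D) (P : Set (QClause Cd DP D))
    (p : DP) : Prop :=
  ∃ p', occursInProgram P p' ∧ R.onDP p p' ≠ ⊥

/-- An atom is relevant for `𝒫` iff it is an equation, a primitive atom, or a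
defined atom whose predicate symbol is affected by `𝒫`. -/
def Relevant (R : Proximity Cd DP dpA D) (P : Set (QClause Cd DP D)) :
    Atom Cd DP → Prop
  | .defined p _ => affected R P p
  | .prim _ _ => True
  | .eq _ _ => True

end SQCLP

namespace SQCLP

variable {S : TSig} {Cd : ConstraintDomain S} {DP : Type} {dpA : DP → ℕ}
variable {D : Type} [Lattice D] [BoundedOrder D]

/-- A goal `(Aᵢ#Wᵢ, Wᵢ ⊒? βᵢ)_{i=1…m}` for a qualified program: a list of
atoms, each annotated with a qualification variable and a threshold
(`none` representing `?`). -/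
abbrev QGoal (Cd : ConstraintDomain S) (DP : Type) (D : Type) := List (Atom Cd DP × S.Var × Option D)

/-- Well-formedness of a goal: the qualification variables are pairwise
distinct, disjoint from the data variables occurring in the goal's atoms, and
the thresholds belong to `D∖{⊥}`. -/
def QGoal.WF (G : QGoal Cd DP D) : Prop :=
  (G.map (fun g => g.2.1)).Nodup ∧
  (∀ g ∈ G, ∀ g' ∈ G, ¬ Atom.HasVar (g'.2.1) g.1) ∧
  (∀ g ∈ G, ∀ w, g.2.2 = some w → (w : D) ≠ ⊥)

/-- `x` is a data variable of the goal `G` (it occurs in one of its atoms). -/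
def QGoal.DataVar (G : QGoal Cd DP D) (x : S.Var) : Prop :=
  ∃ g ∈ G, Atom.HasVar x g.1

/-- `x` is a qualification variable of the goal `G`. -/
def QGoal.QVar (G : QGoal Cd DP D) (x : S.Var) : Prop :=
  ∃ g ∈ G, g.2.1 = x

/-- `⟨σ, μ, Π⟩` is a solution of the goal `G` w.r.t. the SQCLP-program `𝒫`:
`Π` is a satisfiable finite set of atomic constraints, and for every annotated
atom `Aᵢ#Wᵢ` with threshold `βᵢ`: `Wᵢμ ∈ D∖{⊥}`, `Wᵢμ ⊒? βᵢ` and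
`𝒫 ⊢_SQCHL ((Aᵢσ)#(Wᵢμ) ⇐ Π)`. -/
def IsSQSolution (Q : QualDomain D) (R : Proximity Cd DP dpA D)
    (P : Set (QClause Cd DP D)) (G : QGoal Cd DP D)
    (σ : Subst S) (μ : S.Var → D) (Pi : Set (ACon Cd)) : Prop :=
  Pi.Finite ∧ Satisfiable Pi ∧
  ∀ g ∈ G, μ g.2.1 ≠ ⊥ ∧ geqQ (μ g.2.1) g.2.2 ∧
    SQCHL Q R P Pi (g.1.subst σ) (μ g.2.1)

/-- `⟨σ, μ, Π⟩` is a solution of the goal `G` w.r.t. the QCLP-program `𝒫`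
(defined as for SQCLP with `⊢_QCHL` in place of `⊢_SQCHL`). -/
def IsQSolution (Q : QualDomain D)
    (P : Set (QClause Cd DP D)) (G : QGoal Cd DP D)
    (σ : Subst S) (μ : S.Var → D) (Pi : Set (ACon Cd)) : Prop :=
  Pi.Finite ∧ Satisfiable Pi ∧
  ∀ g ∈ G, μ g.2.1 ≠ ⊥ ∧ geqQ (μ g.2.1) g.2.2 ∧
    QCHL Q P Pi (g.1.subst σ) (μ g.2.1)

/-- The transformed goal `elim_ℛ(G)`: each atom `A` is replaced by `A∼`. -/
def elimRGoal (D : Type) [Lattice D] [BoundedOrder D] (G : QGoal Cd DP D) :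
    QGoal Cd (EDP Cd DP D) D :=
  G.map (fun g => (g.1.toSim D, g.2.1, g.2.2))

end SQCLP

namespace SQCLP

variable {S : TSig} {Cd : ConstraintDomain S} {DP : Type}
variable {D : Type} [Lattice D] [BoundedOrder D]

/-- The substitution `{x ↦ t}`. -/
noncomputable def pointSubst (x : S.Var) (t : Term S) : Subst S :=
  fun y => if y = x then t else .var y

/-- The substitution `{x ↦ tx, y ↦ ty, z ↦ tz}`. -/
noncomputable def pointSubst3 (x y z : S.Var) (tx ty tz : Term S) : Subst S :=
  fun w => if w = x then tx else if w = y then ty else if w = z then tz else .var w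

/-- Existential expressibility of a qualification domain `𝒟` in a constraint
domain `𝒞`: an injective embedding `ι : D∖{⊥} → C` into the ground terms,
an existential constraint `qVal(X)` whose solutions are exactly the valuations
`η` with `η X ∈ ran(ι)`, and an existential constraint `qBound(X,Y,Z)`
encoding `x ⊑ y ∘ z` on `ι`-images. -/
structure ExpressibleIn (Q : QualDomain D) (Cd : ConstraintDomain S) where
  emb : D → Term S
  emb_ground : ∀ d : D, d ≠ ⊥ → (emb d).IsGround
  emb_inj : ∀ d e : D, d ≠ ⊥ → e ≠ ⊥ → emb d = emb e → d = e
  qvX : S.Var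
  qvE : List S.Var
  qvB : List (ACon Cd)
  qv_notE : qvX ∉ qvE
  qv_fv : ∀ c ∈ qvB, ∀ x, ACon.HasVar x c → x = qvX ∨ x ∈ qvE
  qv_spec : ∀ η : Subst S, IsValuation η →
    (ExCon.SolvedBy ⟨qvE, qvB⟩ η ↔ ∃ d : D, d ≠ ⊥ ∧ η qvX = emb d)
  qbX : S.Var
  qbY : S.Var
  qbZ : S.Var
  qb_distinct : qbX ≠ qbY ∧ qbX ≠ qbZ ∧ qbY ≠ qbZ
  qbE : List S.Var
  qb_notE : qbX ∉ qbE ∧ qbY ∉ qbE ∧ qbZ ∉ qbE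
  qbB : List (ACon Cd)
  qb_fv : ∀ c ∈ qbB, ∀ x, ACon.HasVar x c → x = qbX ∨ x = qbY ∨ x = qbZ ∨ x ∈ qbE
  qb_spec : ∀ η : Subst S, IsValuation η → ∀ x y z : D,
    x ≠ ⊥ → y ≠ ⊥ → z ≠ ⊥ → η qbX = emb x → η qbY = emb y → η qbZ = emb z →
    (ExCon.SolvedBy ⟨qbE, qbB⟩ η ↔ x ≤ Q.att y z)

variable {Q : QualDomain D}

/-- The existential constraint `qVal(t)` (i.e. `qVal(X)` instantiated by
`{X ↦ t}`). -/
noncomputable def qvalEx (E : ExpressibleIn Q Cd) (t : Term S) : ExCon Cd :=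
  ⟨E.qvE, E.qvB.map (ACon.subst (pointSubst E.qvX t))⟩

/-- The existential constraint `qBound(t₁,t₂,t₃)`. -/
noncomputable def qboundEx (E : ExpressibleIn Q Cd) (t1 t2 t3 : Term S) : ExCon Cd :=
  ⟨E.qbE, E.qbB.map (ACon.subst (pointSubst3 E.qbX E.qbY E.qbZ t1 t2 t3))⟩

/-- An existential constraint is true in `𝒞` iff it is solved by every
valuation. -/
def ExTrue (e : ExCon Cd) : Prop := ∀ η : Subst S, IsValuation η → e.SolvedBy η

/-- The defined-predicate alphabet of `elim_𝒟` transformed programs: a copy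
`p'` of each original defined predicate symbol `p` (with one extra argument)
plus the fresh predicates `qVal` and `qBound`. -/
inductive TDP (DP : Type) : Type
  | prime : DP → TDP DP
  | qval : TDP DP
  | qbound : TDP DP

/-- The program clause `qVal(X) ← B₁,…,Bₘ` of `E_𝒟`. -/
def qvalClause (E : ExpressibleIn Q Cd) (DP : Type) : Clause Cd (TDP DP) :=
  ⟨.qval, [.var E.qvX], E.qvB.map ACon.toAtom⟩

/-- The program clause `qBound(X,Y,Z) ← C₁,…,C_q` of `E_𝒟`. -/
def qboundClause (E : ExpressibleIn Q Cd) (DP : Type) : Clause Cd (TDP DP) :=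
  ⟨.qbound, [.var E.qbX, .var E.qbY, .var E.qbZ], E.qbB.map ACon.toAtom⟩

/-- The transformation of atoms `elim_𝒟(A) = (A', w)` (rules TEA, TPA, TDA):
equations and primitive atoms are unchanged and paired with `ι(⊤)`; a defined
atom `p(t₁,…,tₙ)` becomes `p'(t₁,…,tₙ,W)` paired with the fresh variable `W`. -/
inductive ElimAtom (E : ExpressibleIn Q Cd) :
    Atom Cd DP → Atom Cd (TDP DP) → Term S → Prop
  | eq (t s : Term S) : ElimAtom E (.eq t s) (.eq t s) (E.emb ⊤)
  | prim (r : Cd.PP) (ts : List (Term S)) :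
      ElimAtom E (.prim r ts) (.prim r ts) (E.emb ⊤)
  | defined (p : DP) (ts : List (Term S)) (W : S.Var) :
      (∀ t ∈ ts, ¬ t.HasVar W) →
      ElimAtom E (.defined p ts) (.defined (.prime p) (ts ++ [.var W])) (.var W)

/-- `⟦w' ⊒? ι(w)⟧`: omitted if `w = ?`, and the atom `qBound(ι(w), ι(⊤), w')`
otherwise. -/
def threshList (E : ExpressibleIn Q Cd) (w : Option D) (w' : Term S) :
    List (Atom Cd (TDP DP)) :=
  match w with
  | none => []
  | some wj => [.defined .qbound [E.emb wj, E.emb ⊤, w']]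

/-- Transformation of clause bodies (rule TPC): each annotated body atom
`Bⱼ#wⱼ` with `elim_𝒟(Bⱼ) = (Bⱼ', wⱼ')` contributes the segment
`qVal(wⱼ'), ⟦wⱼ' ⊒? ι(wⱼ)⟧, qBound(W, ι(α), wⱼ'), Bⱼ'`. -/
inductive ElimBody (E : ExpressibleIn Q Cd) (W : S.Var) (α : D) :
    List (Atom Cd DP × Option D) → List (Term S) → List (Atom Cd (TDP DP)) → Prop
  | nil : ElimBody E W α [] [] []
  | cons (B : Atom Cd DP) (w : Option D) (B' : Atom Cd (TDP DP)) (w' : Term S)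
      (rest : List (Atom Cd DP × Option D)) (ws : List (Term S))
      (rest' : List (Atom Cd (TDP DP))) :
      ElimAtom E B B' w' →
      ElimBody E W α rest ws rest' →
      ElimBody E W α ((B, w) :: rest) (w' :: ws)
        ((Atom.defined .qval [w'] :: threshList E w w' ++
          [Atom.defined .qbound [.var W, E.emb α, w'], B']) ++ rest')

/-- Transformation of program clauses (rule TPC): `cl'` is a transformed
version of `cl`, for a choice of a fresh variable `W` and of fresh pairwise
distinct variables in the `wⱼ'`. -/
def ElimClause (E : ExpressibleIn Q Cd) (cl : QClause Cd DP D)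
    (cl' : Clause Cd (TDP DP)) : Prop :=
  ∃ (W : S.Var) (ws : List (Term S)) (body' : List (Atom Cd (TDP DP))),
    ElimBody E W cl.att cl.body ws body' ∧
    ¬ cl.occursVar W ∧
    (∀ w' ∈ ws, ∀ x : S.Var, w'.HasVar x → ¬ cl.occursVar x ∧ x ≠ W) ∧
    List.Pairwise (fun a b : Term S => ∀ x : S.Var, a.HasVar x → ¬ b.HasVar x) ws ∧
    cl' = ⟨.prime cl.head, cl.args ++ [.var W],
      Atom.defined .qval [.var W] :: body'⟩

/-- The transformed program `elim_𝒟(𝒫)`: the two clauses of `E_𝒟` together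
with a transformed version of each clause of `𝒫`. -/
def elimD (E : ExpressibleIn Q Cd) (P : Set (QClause Cd DP D)) :
    Set (Clause Cd (TDP DP)) :=
  {qvalClause E DP, qboundClause E DP} ∪ {cl' | ∃ cl ∈ P, ElimClause E cl cl'}

end SQCLP

namespace SQCLP

variable {S : TSig} {Cd : ConstraintDomain S} {DP : Type}
variable {D : Type} [Lattice D] [BoundedOrder D] {Q : QualDomain D}

/-- `⟨σ, Π⟩` is a solution of the CLP goal `G` (a list of atoms) w.r.t. the
CLP-program `𝒫`: `Π` is a satisfiable finite set of atomic constraints and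
`𝒫 ⊢_CHL ((Aσ) ⇐ Π)` for every atom `A` of `G`. -/
def IsCLPSolution (P : Set (Clause Cd DP)) (G : List (Atom Cd DP))
    (σ : Subst S) (Pi : Set (ACon Cd)) : Prop :=
  Pi.Finite ∧ Satisfiable Pi ∧ ∀ A ∈ G, CHL P Pi (A.subst σ)

/-- Transformation of goals (rule TG): each annotated goal atom `Bⱼ#Wⱼ` with
threshold `βⱼ` and `elim_𝒟(Bⱼ) = (Bⱼ', wⱼ')` contributes the segment
`qVal(Wⱼ), ⟦Wⱼ ⊒? ι(βⱼ)⟧, qVal(wⱼ'), qBound(Wⱼ, ι(⊤), wⱼ'), Bⱼ'`. -/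
inductive ElimGoalItems (E : ExpressibleIn Q Cd) :
    QGoal Cd DP D → List (Term S) → List (Atom Cd (TDP DP)) → Prop
  | nil : ElimGoalItems E [] [] []
  | cons (B : Atom Cd DP) (Wv : S.Var) (β : Option D)
      (B' : Atom Cd (TDP DP)) (w' : Term S)
      (rest : QGoal Cd DP D) (ws : List (Term S))
      (rest' : List (Atom Cd (TDP DP))) :
      ElimAtom E B B' w' →
      ElimGoalItems E rest ws rest' →
      ElimGoalItems E ((B, Wv, β) :: rest) (w' :: ws)
        ((Atom.defined .qval [.var Wv] :: threshList E β (.var Wv) ++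
          (Atom.defined .qval [w'] ::
            [Atom.defined .qbound [.var Wv, E.emb ⊤, w'], B'])) ++ rest')

/-- The transformed goal `G' = elim_𝒟(G)`, for a choice of fresh pairwise
distinct variables in the `wⱼ'` (fresh w.r.t. the data and qualification
variables of `G`). -/
def ElimGoal (E : ExpressibleIn Q Cd) (G : QGoal Cd DP D)
    (G' : List (Atom Cd (TDP DP))) : Prop :=
  ∃ ws : List (Term S),
    ElimGoalItems E G ws G' ∧
    (∀ w' ∈ ws, ∀ x : S.Var, Term.HasVar x w' →
      ¬ G.DataVar x ∧ ¬ G.QVar x) ∧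
    List.Pairwise (fun a b : Term S => ∀ x : S.Var, a.HasVar x → ¬ b.HasVar x) ws

end SQCLP

namespace SQCLP

variable {S : TSig} {Cd : ConstraintDomain S} {DP : Type}
variable {D : Type} [Lattice D] [BoundedOrder D] {Q : QualDomain D}

section Substitution

theorem Term.substList_eq_map (θ : Subst S) :
    ∀ ts : List (Term S), Term.substList θ ts = ts.map (Term.subst θ)
  | [] => rfl
  | t :: ts => by rw [Term.substList, List.map_cons, Term.substList_eq_map]

mutual
theorem Term.subst_subst (σ ν : Subst S) : ∀ t : Term S,
    (t.subst σ).subst ν = t.subst (σ.comp ν)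
  | .var _ => rfl
  | .bv _ => rfl
  | .app c ts => by simp only [Term.subst, Term.substList_subst]
theorem Term.substList_subst (σ ν : Subst S) : ∀ ts : List (Term S),
    Term.substList ν (Term.substList σ ts) = Term.substList (σ.comp ν) ts
  | [] => rfl
  | t :: ts => by simp only [Term.substList, Term.subst_subst, Term.substList_subst]
end

mutual
theorem Term.isGround_subst {ν : Subst S} (hν : IsValuation ν) : ∀ t : Term S,
    (t.subst ν).IsGround
  | .var x => hν x
  | .bv u => .bv u
  | .app c ts => .app c _ (Term.isGround_substList hν ts)
theorem Term.isGround_substList {ν : Subst S} (hν : IsValuation ν) :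
    ∀ ts : List (Term S), ∀ t ∈ Term.substList ν ts, t.IsGround
  | [], _, h => nomatch h
  | s :: ts, t, h => by
      rcases List.mem_cons.mp h with rfl | h
      · exact Term.isGround_subst hν s
      · exact Term.isGround_substList hν ts t h
end

theorem Term.subst_of_isGround (θ : Subst S) {t : Term S} (h : t.IsGround) :
    t.subst θ = t := by
  induction h with
  | bv u => rfl
  | app c ts _ ih =>
      rw [Term.subst, Term.substList_eq_map, (List.map_congr_left ih).trans (List.map_id ts)]

theorem Term.not_hasVar_of_isGround {t : Term S} (hg : t.IsGround) {x : S.Var} :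
    ¬ t.HasVar x := by
  intro h
  induction h with
  | var => cases hg
  | app c ts t hmem _ ih => cases hg with
    | app _ _ hts => exact ih (hts t hmem)

@[simp]
theorem Term.hasVar_var_iff {x y : S.Var} : Term.HasVar x (.var y : Term S) ↔ x = y :=
  ⟨fun h => by cases h; rfl, fun h => h ▸ .var⟩

@[simp]
theorem Atom.hasVar_defined_iff {x : S.Var} {p : DP} {ts : List (Term S)} :
    Atom.HasVar x (.defined p ts : Atom Cd DP) ↔ ∃ t ∈ ts, t.HasVar x :=
  ⟨fun h => by cases h with | defined _ _ t ht hx => exact ⟨t, ht, hx⟩,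
    fun ⟨t, ht, hx⟩ => .defined p ts t ht hx⟩

theorem ACon.subst_subst (σ ν : Subst S) (c : ACon Cd) :
    (c.subst σ).subst ν = c.subst (σ.comp ν) := by
  cases c <;> simp [ACon.subst, Term.subst_subst, Function.comp_def]

theorem Atom.subst_subst (σ ν : Subst S) (A : Atom Cd DP) :
    (A.subst σ).subst ν = A.subst (σ.comp ν) := by
  cases A <;> simp [Atom.subst, Term.subst_subst, Function.comp_def]

theorem ACon.toAtom_subst (θ : Subst S) (c : ACon Cd) :
    (ACon.toAtom c : Atom Cd DP).subst θ = (c.subst θ).toAtom := by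
  cases c <;> rfl

theorem Subst.comp_eq_self_of_isValuation {ν : Subst S} (hν : IsValuation ν)
    (η : Subst S) : ν.comp η = ν :=
  funext fun x => Term.subst_of_isGround η (hν x)

theorem IsValuation.comp (σ : Subst S) {ν : Subst S} (hν : IsValuation ν) :
    IsValuation (σ.comp ν) :=
  fun x => Term.isGround_subst hν (σ x)

theorem entails.subst {Pi : Set (ACon Cd)} {c : ACon Cd} (h : entails Pi c)
    {ν : Subst S} (hν : ν ∈ SolC Pi) : entails Pi (c.subst ν) := by
  intro η _
  rw [solves, ACon.subst_subst, Subst.comp_eq_self_of_isValuation hν.1]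
  exact h ν hν

end Substitution

section Derivability

variable {P : Set (Clause Cd DP)} {Pi : Set (ACon Cd)}

theorem CHL.subst {ν : Subst S} (hν : ν ∈ SolC Pi) {A : Atom Cd DP}
    (h : CHL P Pi A) : CHL P Pi (A.subst ν) := by
  induction h with
  | DA cl θ args' hmem hlen _ _ ihargs ihbody =>
      refine CHL.DA cl (θ.comp ν) (args'.map (Term.subst ν)) hmem
        (by simpa using hlen) (fun i h1 h2 => ?_) (fun B hB => ?_)
      · simpa [Atom.subst, Term.subst_subst] using ihargs i (by simpa using h1) h2
      · simpa only [Atom.subst_subst] using ihbody B hB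
  | EA t s h => exact CHL.EA _ _ (h.subst hν)
  | PA r ts h => exact CHL.PA _ _ (h.subst hν)

theorem CHL.entails_of_toAtom {c : ACon Cd} (h : CHL P Pi (ACon.toAtom c)) :
    entails Pi c := by
  cases c with
  | prim r ts => cases h with | PA _ _ h => exact h
  | eq t s => cases h with | EA _ _ h => exact h

theorem CHL.exists_clause_of_defined {p : DP} {args : List (Term S)}
    (h : CHL P Pi (.defined p args)) :
    ∃ cl ∈ P, ∃ θ : Subst S, cl.head = p ∧ args.length = cl.args.length ∧
      (∀ (i : ℕ) (h1 : i < args.length) (h2 : i < cl.args.length),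
        CHL P Pi (.eq (args.get ⟨i, h1⟩) ((cl.args.get ⟨i, h2⟩).subst θ))) ∧
      ∀ B ∈ cl.body, CHL P Pi (B.subst θ) := by
  cases h with
  | DA cl θ _ hmem hlen hargs hbody => exact ⟨cl, hmem, θ, rfl, hlen, hargs, hbody⟩

end Derivability

section QVal

variable {E : ExpressibleIn Q Cd}

theorem ExpressibleIn.not_hasVar_emb (E : ExpressibleIn Q Cd) {d : D} (hd : d ≠ ⊥)
    {x : S.Var} : ¬ (E.emb d).HasVar x :=
  Term.not_hasVar_of_isGround (E.emb_ground d hd)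

theorem eq_qvalClause_of_mem_elimD {P : Set (QClause Cd DP D)} {cl : Clause Cd (TDP DP)}
    (hmem : cl ∈ elimD E P) (hhead : cl.head = .qval) : cl = qvalClause E DP := by
  rcases hmem with (h | rfl) | ⟨_, _, _, _, _, _, _, _, _, rfl⟩
  · exact h
  · cases hhead
  · cases hhead

theorem CHL.qval_subst_eq_emb {P : Set (QClause Cd DP D)} {Pi : Set (ACon Cd)}
    {t : Term S} (h : CHL (elimD E P) Pi (.defined .qval [t]))
    {ν : Subst S} (hν : ν ∈ SolC Pi) : ∃ e : D, e ≠ ⊥ ∧ t.subst ν = E.emb e := by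
  obtain ⟨cl, hmem, θ, hhead, -, hargs, hbody⟩ := h.exists_clause_of_defined
  obtain rfl := eq_qvalClause_of_mem_elimD hmem hhead
  have harg : t.subst ν = (θ E.qvX).subst ν :=
    (hargs 0 (by simp) (by simp [qvalClause])).entails_of_toAtom (c := .eq _ _) ν hν
  have hsolved : ExCon.SolvedBy ⟨E.qvE, E.qvB⟩ (θ.comp ν) := by
    refine ⟨θ.comp ν, hν.1.comp θ, fun _ _ => rfl, fun c hc => ?_⟩
    have hc' := hbody (ACon.toAtom c) (List.mem_map_of_mem hc)
    rw [ACon.toAtom_subst] at hc'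
    simpa only [solves, ACon.subst_subst] using hc'.entails_of_toAtom ν hν
  obtain ⟨e, he, hX⟩ := (E.qv_spec _ (hν.1.comp θ)).mp hsolved
  exact ⟨e, he, harg.trans hX⟩

end QVal

section GoalVariables

variable {E : ExpressibleIn Q Cd}

theorem ElimAtom.eq_var_of_hasVar [Nontrivial D] {B : Atom Cd DP} {B' : Atom Cd (TDP DP)} {w' : Term S}
    (hB : ElimAtom E B B' w') {x : S.Var} (hx : w'.HasVar x) : w' = .var x := by
  cases hB with
  | defined => cases hx; rfl
  | _ => exact absurd hx (E.not_hasVar_emb top_ne_bot)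

theorem ElimAtom.hasVar {B : Atom Cd DP} {B' : Atom Cd (TDP DP)} {w' : Term S}
    (hB : ElimAtom E B B' w') {x : S.Var} (hx : B'.HasVar x) :
    B.HasVar x ∨ w' = .var x := by
  cases hB with
  | eq t s => exact .inl (by cases hx with
    | eqL _ _ hx => exact .eqL t s hx
    | eqR _ _ hx => exact .eqR t s hx)
  | prim => exact .inl (by cases hx with | prim _ _ t ht hx => exact .prim _ _ t ht hx)
  | defined p ts W =>
      obtain ⟨t, ht, hx⟩ := Atom.hasVar_defined_iff.mp hx
      rcases List.mem_append.mp ht with ht | ht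
      · exact .inl (.defined p ts t ht hx)
      · simp_all

theorem hasVar_of_mem_threshList [Nontrivial D] {β : Option D} (hβ : β ≠ some ⊥) {Wv x : S.Var}
    {A : Atom Cd (TDP DP)} (hA : A ∈ threshList E β (.var Wv)) (hx : A.HasVar x) : x = Wv := by
  cases β with
  | none => cases hA
  | some w =>
      have hw : w ≠ ⊥ := fun h => hβ (h ▸ rfl)
      simp only [threshList, List.mem_singleton] at hA
      subst hA
      simpa [E.not_hasVar_emb hw, E.not_hasVar_emb (top_ne_bot (α := D))] using hx

theorem hasVar_of_mem_goalSegment [Nontrivial D] {B : Atom Cd DP} {B' : Atom Cd (TDP DP)} {w' : Term S}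
    (hB : ElimAtom E B B' w') {β : Option D} (hβ : β ≠ some ⊥) {Wv x : S.Var}
    {A : Atom Cd (TDP DP)}
    (hA : A ∈ Atom.defined .qval [.var Wv] :: threshList E β (.var Wv) ++
      (Atom.defined .qval [w'] :: [Atom.defined .qbound [.var Wv, E.emb ⊤, w'], B']))
    (hx : A.HasVar x) : B.HasVar x ∨ x = Wv ∨ w' = .var x := by
  simp only [List.mem_append, List.mem_cons, List.not_mem_nil, or_false] at hA
  rcases hA with (rfl | hA) | rfl | rfl | rfl
  · simp_all
  · exact .inr (.inl (hasVar_of_mem_threshList hβ hA hx))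
  · simp only [Atom.hasVar_defined_iff, List.mem_singleton, exists_eq_left] at hx
    exact .inr (.inr (hB.eq_var_of_hasVar hx))
  · simp only [Atom.hasVar_defined_iff, List.mem_cons, List.not_mem_nil, or_false,
      exists_eq_or_imp, exists_eq_left, Term.hasVar_var_iff,
      E.not_hasVar_emb (top_ne_bot (α := D)), false_or] at hx
    exact .inr (hx.imp_right hB.eq_var_of_hasVar)
  · exact (hB.hasVar hx).imp_right .inr

theorem ElimGoalItems.hasVar [Nontrivial D] {Gr : QGoal Cd DP D} {ws : List (Term S)}
    {G' : List (Atom Cd (TDP DP))} (h : ElimGoalItems E Gr ws G')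
    (hth : ∀ g ∈ Gr, g.2.2 ≠ some ⊥) {A : Atom Cd (TDP DP)} (hA : A ∈ G')
    {x : S.Var} (hx : A.HasVar x) :
    Gr.DataVar x ∨ Atom.defined .qval [.var x] ∈ G' := by
  induction h with
  | nil => cases hA
  | cons B Wv β B' w' rest ws rest' hB _ ih =>
      rcases List.mem_append.mp hA with hA | hA
      · rcases hasVar_of_mem_goalSegment hB (hth _ List.mem_cons_self) hA hx
          with hBx | rfl | hw'
        · exact .inl ⟨_, List.mem_cons_self, hBx⟩
        · exact .inr (by simp)
        · exact .inr (by simp [← hw'])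
      · rcases ih (fun g hg => hth g (List.mem_cons_of_mem _ hg)) hA with ⟨g, hg, hgx⟩ | hq
        · exact .inl ⟨g, List.mem_cons_of_mem _ hg, hgx⟩
        · exact .inr (List.mem_append_right _ hq)

end GoalVariables

theorem Atom.hasVar_of_hasVar_toSim {B : Atom Cd DP} {x : S.Var}
    (h : (B.toSim D).HasVar x) : B.HasVar x := by
  cases B with
  | defined p ts => cases h with | defined _ _ t ht hx => exact .defined p ts t ht hx
  | prim r ts => cases h with | prim _ _ t ht hx => exact .prim r ts t ht hx
  | eq t s =>
      obtain ⟨u, hu, hx⟩ := Atom.hasVar_defined_iff.mp h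
      simp only [List.mem_cons, List.not_mem_nil, or_false] at hu
      rcases hu with rfl | rfl
      · exact .eqL _ _ hx
      · exact .eqR _ _ hx

theorem QGoal.dataVar_of_dataVar_elimRGoal {G : QGoal Cd DP D} {x : S.Var}
    (h : (elimRGoal D G).DataVar x) : G.DataVar x := by
  obtain ⟨g', hg', hx⟩ := h
  rw [elimRGoal, List.mem_map] at hg'
  obtain ⟨g, hg, rfl⟩ := hg'
  exact ⟨g, hg, Atom.hasVar_of_hasVar_toSim hx⟩

/-- Lemma soltoground: let `⟨ℛ,𝒟,𝒞⟩` be an admissible triple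
with `𝒟` existentially expressible in `𝒞`, `𝒫` an SQCLP(ℛ,𝒟,𝒞)-program and `G`
a goal for `𝒫` whose atoms are all relevant for `𝒫`; let
`𝒫'' = elim_𝒟(elim_ℛ(𝒫))` and `G'' = elim_𝒟(elim_ℛ(G))`.  If
`⟨σ', Π⟩ ∈ Sol_{𝒫''}(G'')`, `ν ∈ Sol_𝒞(Π)` and `θ = σ'ν`, then
`⟨θ, Π⟩ ∈ Sol_{𝒫''}(G'')`, and moreover `Wθ ∈ ran(ι)` for every variable `W`
of `G''` that is not a (data) variable of `G` (in particular for every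
qualification variable of `G`). -/
theorem stmt13 {S : TSig} {Cd : ConstraintDomain S} {DP : Type} {dpA : DP → ℕ}
    {D : Type} [Lattice D] [BoundedOrder D] [Nontrivial D]
    (Q : QualDomain D) (R : Proximity Cd DP dpA D) (E : ExpressibleIn Q Cd)
    (v : ℕ → S.Var) (hv : Function.Injective v)
    (P : Set (QClause Cd DP D)) (hWF : WFProgram P)
    (G : QGoal Cd DP D) (hGWF : G.WF)
    (hrel : ∀ g ∈ G, Relevant R P g.1)
    (G'' : List (Atom Cd (TDP (EDP Cd DP D))))
    (hG'' : ElimGoal E (elimRGoal D G) G'')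
    (σ' : Subst S) (Pi : Set (ACon Cd))
    (hsol : IsCLPSolution (elimD E (elimR R P)) G'' σ' Pi)
    (ν : Subst S) (hν : ν ∈ SolC Pi) :
    IsCLPSolution (elimD E (elimR R P)) G'' (σ'.comp ν) Pi ∧
    ∀ x : S.Var, (∃ A ∈ G'', Atom.HasVar x A) → ¬ G.DataVar x →
      ∃ e : D, e ≠ ⊥ ∧ σ'.comp ν x = E.emb e := by
  obtain ⟨hfin, hsat, hder⟩ := hsol
  refine ⟨⟨hfin, hsat, fun A hA => ?_⟩, ?_⟩
  · simpa only [Atom.subst_subst] using (hder A hA).subst hν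
  · rintro x ⟨A, hA, hx⟩ hndv
    obtain ⟨ws, hitems, -, -⟩ := hG''
    have hth : ∀ g ∈ elimRGoal D G, g.2.2 ≠ some ⊥ := by
      intro g' hg' hβ
      rw [elimRGoal, List.mem_map] at hg'
      obtain ⟨g, hg, rfl⟩ := hg'
      exact hGWF.2.2 g hg ⊥ hβ rfl
    rcases hitems.hasVar hth hA hx with hdv | hq
    · exact absurd (QGoal.dataVar_of_dataVar_elimRGoal hdv) hndv
    · exact (hder _ hq).qval_subst_eq_emb hν

end SQCLP
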